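/- Let A > 0 and let γ : [0,1] → X_A^no be a continuous path that is not constant on any nondegenerate subinterval of [0,1]. Then γ satisfies d(γ(s), γ(t)) = d(γ(s), γ(u)) + d(γ(u), γ(t)) for all 0 ≤ s ≤ u ≤ t ≤ 1 (i.e. γ is a geodesic) if and only if for each i ∈ {1,2,3} the angle function t ↦ θ_i(γ(t)) is monotone (monotone nondecreasing or monotone nonincreasing) on [0,1]. -/
import Mathlib


open Set Filter

noncomputable section

/-- The edge model `X_A`: triples of positive reals satisfying the strict triangle
inequalities and having Heron area `A`. -/
def X (A : ℝ) : Set (Fin 3 → ℝ) :=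
  {a | (∀ i, 0 < a i) ∧
    (∀ i j k : Fin 3, i ≠ j → j ≠ k → i ≠ k → a i < a j + a k) ∧
    Real.sqrt ((a 0 + a 1 + a 2) * (-a 0 + a 1 + a 2) *
      (a 0 - a 1 + a 2) * (a 0 + a 1 - a 2)) / 4 = A}

/-- The non-obtuse part `X_A^no`. -/
def XNo (A : ℝ) : Set (Fin 3 → ℝ) :=
  {a | a ∈ X A ∧ ∀ i j k : Fin 3, i ≠ j → j ≠ k → i ≠ k → a i ^ 2 ≤ a j ^ 2 + a k ^ 2}

/-- The acute part `X_A^ac`. -/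
def XAc (A : ℝ) : Set (Fin 3 → ℝ) :=
  {a | a ∈ X A ∧ ∀ i j k : Fin 3, i ≠ j → j ≠ k → i ≠ k → a i ^ 2 < a j ^ 2 + a k ^ 2}

/-- The distance `d(a,b) = max_i |log a_i - log b_i|` on the edge model. -/
def dd (a b : Fin 3 → ℝ) : ℝ :=
  max |Real.log (a 0) - Real.log (b 0)|
    (max |Real.log (a 1) - Real.log (b 1)| |Real.log (a 2) - Real.log (b 2)|)

/-- The angle at vertex `i` of the triangle with edge lengths `a`, by the law of cosines. -/
def thetaA (a : Fin 3 → ℝ) (i : Fin 3) : ℝ :=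
  Real.arccos ((a (i + 1) ^ 2 + a (i + 2) ^ 2 - a i ^ 2) / (2 * a (i + 1) * a (i + 2)))

/- ### Auxiliary lemmas -/

lemma max3_rot (a b c : ℝ) : max a (max b c) = max b (max c a) := by
  rw [max_comm c a, ← max_assoc, max_comm a b, max_assoc]

lemma abs_pat (x0 x1 x2 : ℝ) (h0 : x1 + x2 ≤ 0) (h1 : 0 ≤ x2 + x0) (h2 : 0 ≤ x0 + x1) :
    max |x0| (max |x1| |x2|) = (|x1+x2| + |x2+x0| + |x0+x1|)/2 := by
  have hx0 : 0 ≤ x0 := by linarith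
  have hb1 : |x1| ≤ x0 := abs_le.mpr ⟨by linarith, by linarith⟩
  have hb2 : |x2| ≤ x0 := abs_le.mpr ⟨by linarith, by linarith⟩
  rw [abs_of_nonneg hx0, max_eq_left (max_le hb1 hb2),
    abs_of_nonpos h0, abs_of_nonneg h1, abs_of_nonneg h2]
  ring

lemma abs_pat' (x0 x1 x2 : ℝ) (h0 : 0 ≤ x1 + x2) (h1 : x2 + x0 ≤ 0) (h2 : x0 + x1 ≤ 0) :
    max |x0| (max |x1| |x2|) = (|x1+x2| + |x2+x0| + |x0+x1|)/2 := by
  have hx0 : x0 ≤ 0 := by linarith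
  have hb1 : |x1| ≤ -x0 := abs_le.mpr ⟨by linarith, by linarith⟩
  have hb2 : |x2| ≤ -x0 := abs_le.mpr ⟨by linarith, by linarith⟩
  rw [abs_of_nonpos hx0, max_eq_left (max_le hb1 hb2),
    abs_of_nonneg h0, abs_of_nonpos h1, abs_of_nonpos h2]
  ring

lemma abs_max_eq (x0 x1 x2 : ℝ)
    (hle : x1 + x2 ≤ 0 ∨ x2 + x0 ≤ 0 ∨ x0 + x1 ≤ 0)
    (hge : 0 ≤ x1 + x2 ∨ 0 ≤ x2 + x0 ∨ 0 ≤ x0 + x1) :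
    max |x0| (max |x1| |x2|) = (|x1+x2| + |x2+x0| + |x0+x1|)/2 := by
  have rot1 : max |x0| (max |x1| |x2|) = max |x1| (max |x2| |x0|) := max3_rot _ _ _
  have rot2 : max |x0| (max |x1| |x2|) = max |x2| (max |x0| |x1|) := by
    rw [max3_rot, max3_rot]
  rcases le_total (x1+x2) 0 with a|a <;> rcases le_total (x2+x0) 0 with b|b <;>
    rcases le_total (x0+x1) 0 with c|c
  · rcases hge with h|h|h
    · rw [abs_pat' x0 x1 x2 h b c]
    · rw [rot1, abs_pat' x1 x2 x0 h c a]; ring_nf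
    · rw [rot2, abs_pat' x2 x0 x1 h a b]; ring_nf
  · rw [rot2, abs_pat' x2 x0 x1 c a b]; ring_nf
  · rw [rot1, abs_pat' x1 x2 x0 b c a]; ring_nf
  · rw [abs_pat x0 x1 x2 a b c]
  · rw [abs_pat' x0 x1 x2 a b c]
  · rw [rot1, abs_pat x1 x2 x0 b c a]; ring_nf
  · rw [rot2, abs_pat x2 x0 x1 c a b]; ring_nf
  · rcases hle with h|h|h
    · rw [abs_pat x0 x1 x2 h b c]
    · rw [rot1, abs_pat x1 x2 x0 h c a]; ring_nf
    · rw [rot2, abs_pat x2 x0 x1 h a b]; ring_nf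

lemma cos_identity (x0 x1 x2 : ℝ) (h0 : x0 ≠ 0) (h1 : x1 ≠ 0) (h2 : x2 ≠ 0) :
    ((x1^2+x2^2-x0^2)/(2*x1*x2))^2 + ((x2^2+x0^2-x1^2)/(2*x2*x0))^2 +
      ((x0^2+x1^2-x2^2)/(2*x0*x1))^2 +
      2*(((x1^2+x2^2-x0^2)/(2*x1*x2))*((x2^2+x0^2-x1^2)/(2*x2*x0))*
        ((x0^2+x1^2-x2^2)/(2*x0*x1))) = 1 := by
  field_simp
  ring

lemma c_lt (A x0 x1 x2 y0 y1 y2 : ℝ) (hA : 0 < A)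
    (hx1 : 0 < x1) (hx2 : 0 < x2) (hy1 : 0 < y1) (hy2 : 0 < y2)
    (hNx : 0 ≤ x1^2+x2^2-x0^2) (hNy : 0 ≤ y1^2+y2^2-y0^2)
    (Hx : (x0+x1+x2)*(-x0+x1+x2)*(x0-x1+x2)*(x0+x1-x2) = 16*A^2)
    (Hy : (y0+y1+y2)*(-y0+y1+y2)*(y0-y1+y2)*(y0+y1-y2) = 16*A^2)
    (hP : x1*x2 < y1*y2) :
    (x1^2+x2^2-x0^2)/(2*x1*x2) < (y1^2+y2^2-y0^2)/(2*y1*y2) := by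
  rw [div_lt_div_iff₀ (by positivity) (by positivity)]
  have ex : (x1^2+x2^2-x0^2)^2 = 4*(x1*x2)^2 - 16*A^2 := by linear_combination -Hx
  have ey : (y1^2+y2^2-y0^2)^2 = 4*(y1*y2)^2 - 16*A^2 := by linear_combination -Hy
  have hPsq : (x1*x2)^2 < (y1*y2)^2 := by nlinarith [mul_pos hx1 hx2, mul_pos hy1 hy2]
  have hK : (0:ℝ) < 16*A^2 := by positivity
  have hsq : ((x1^2+x2^2-x0^2)*(2*(y1*y2)))^2 < ((y1^2+y2^2-y0^2)*(2*(x1*x2)))^2 := by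
    nlinarith [mul_pos hK (sub_pos.mpr hPsq)]
  nlinarith [mul_nonneg hNx (by positivity : (0:ℝ) ≤ 2*(y1*y2)),
    mul_nonneg hNy (by positivity : (0:ℝ) ≤ 2*(x1*x2)), hsq]

lemma c_le_iff (A x0 x1 x2 y0 y1 y2 : ℝ) (hA : 0 < A)
    (hx1 : 0 < x1) (hx2 : 0 < x2) (hy1 : 0 < y1) (hy2 : 0 < y2)
    (hNx : 0 ≤ x1^2+x2^2-x0^2) (hNy : 0 ≤ y1^2+y2^2-y0^2)
    (Hx : (x0+x1+x2)*(-x0+x1+x2)*(x0-x1+x2)*(x0+x1-x2) = 16*A^2)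
    (Hy : (y0+y1+y2)*(-y0+y1+y2)*(y0-y1+y2)*(y0+y1-y2) = 16*A^2) :
    (y1^2+y2^2-y0^2)/(2*y1*y2) ≤ (x1^2+x2^2-x0^2)/(2*x1*x2) ↔ y1*y2 ≤ x1*x2 := by
  have ex : (x1^2+x2^2-x0^2)^2 = 4*(x1*x2)^2 - 16*A^2 := by linear_combination -Hx
  have ey : (y1^2+y2^2-y0^2)^2 = 4*(y1*y2)^2 - 16*A^2 := by linear_combination -Hy
  constructor
  · intro h
    by_contra hc
    push_neg at hc
    have := c_lt A x0 x1 x2 y0 y1 y2 hA hx1 hx2 hy1 hy2 hNx hNy Hx Hy hc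
    linarith
  · intro h
    rcases eq_or_lt_of_le h with heq | hlt
    · have hsq2 : (y1*y2)^2 = (x1*x2)^2 := by rw [heq]
      have hM : (y1^2+y2^2-y0^2) = (x1^2+x2^2-x0^2) := by nlinarith [ex, ey, hNx, hNy, hsq2]
      have hD : 2*y1*y2 = 2*x1*x2 := by rw [mul_assoc, mul_assoc, heq]
      rw [hM, hD]
    · exact (c_lt A y0 y1 y2 x0 x1 x2 hA hy1 hy2 hx1 hx2 hNy hNx Hy Hx hlt).le

lemma c_mem (A x0 x1 x2 : ℝ) (hA : 0 < A) (hx1 : 0 < x1) (hx2 : 0 < x2)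
    (hNx : 0 ≤ x1^2+x2^2-x0^2)
    (Hx : (x0+x1+x2)*(-x0+x1+x2)*(x0-x1+x2)*(x0+x1-x2) = 16*A^2) :
    (x1^2+x2^2-x0^2)/(2*x1*x2) ∈ Set.Icc (-1:ℝ) 1 := by
  have ex : (x1^2+x2^2-x0^2)^2 = 4*(x1*x2)^2 - 16*A^2 := by linear_combination -Hx
  have hden : (0:ℝ) < 2*x1*x2 := by positivity
  constructor
  · have : (0:ℝ) ≤ (x1^2+x2^2-x0^2)/(2*x1*x2) := by positivity
    linarith
  · rw [div_le_one hden]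
    nlinarith [mul_pos hx1 hx2, sq_nonneg A, hA]

set_option maxHeartbeats 1000000 in
lemma theta_iff_core (A x0 x1 x2 y0 y1 y2 : ℝ) (hA : 0 < A)
    (hx1 : 0 < x1) (hx2 : 0 < x2) (hy1 : 0 < y1) (hy2 : 0 < y2)
    (hNx : 0 ≤ x1^2+x2^2-x0^2) (hNy : 0 ≤ y1^2+y2^2-y0^2)
    (Hx : (x0+x1+x2)*(-x0+x1+x2)*(x0-x1+x2)*(x0+x1-x2) = 16*A^2)
    (Hy : (y0+y1+y2)*(-y0+y1+y2)*(y0-y1+y2)*(y0+y1-y2) = 16*A^2) :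
    Real.arccos ((x1^2+x2^2-x0^2)/(2*x1*x2)) ≤ Real.arccos ((y1^2+y2^2-y0^2)/(2*y1*y2)) ↔
      Real.log (y1*y2) ≤ Real.log (x1*x2) := by
  have memx := c_mem A x0 x1 x2 hA hx1 hx2 hNx Hx
  have memy := c_mem A y0 y1 y2 hA hy1 hy2 hNy Hy
  rw [Real.log_le_log_iff (by positivity) (by positivity)]
  rw [← c_le_iff A x0 x1 x2 y0 y1 y2 hA hx1 hx2 hy1 hy2 hNx hNy Hx Hy]
  constructor
  · intro h
    by_contra hc
    push_neg at hc
    have := Real.strictAntiOn_arccos memx memy hc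
    linarith
  · intro h
    rcases eq_or_lt_of_le h with heq | hlt
    · rw [heq]
    · exact (Real.strictAntiOn_arccos memy memx hlt).le

set_option maxHeartbeats 1000000 in
lemma core_notall (A x0 x1 x2 y0 y1 y2 : ℝ) (hA : 0 < A)
    (hx0 : 0 < x0) (hx1 : 0 < x1) (hx2 : 0 < x2)
    (hy0 : 0 < y0) (hy1 : 0 < y1) (hy2 : 0 < y2)
    (nx0 : 0 ≤ x1^2+x2^2-x0^2) (nx1 : 0 ≤ x2^2+x0^2-x1^2) (nx2 : 0 ≤ x0^2+x1^2-x2^2)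
    (ny0 : 0 ≤ y1^2+y2^2-y0^2) (ny1 : 0 ≤ y2^2+y0^2-y1^2) (ny2 : 0 ≤ y0^2+y1^2-y2^2)
    (Hx : (x0+x1+x2)*(-x0+x1+x2)*(x0-x1+x2)*(x0+x1-x2) = 16*A^2)
    (Hy : (y0+y1+y2)*(-y0+y1+y2)*(y0-y1+y2)*(y0+y1-y2) = 16*A^2)
    (h0 : x1*x2 < y1*y2) (h1 : x2*x0 < y2*y0) (h2 : x0*x1 < y0*y1) : False := by
  have Hx1 : (x1+x2+x0)*(-x1+x2+x0)*(x1-x2+x0)*(x1+x2-x0) = 16*A^2 := by linear_combination Hx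
  have Hx2 : (x2+x0+x1)*(-x2+x0+x1)*(x2-x0+x1)*(x2+x0-x1) = 16*A^2 := by linear_combination Hx
  have Hy1 : (y1+y2+y0)*(-y1+y2+y0)*(y1-y2+y0)*(y1+y2-y0) = 16*A^2 := by linear_combination Hy
  have Hy2 : (y2+y0+y1)*(-y2+y0+y1)*(y2-y0+y1)*(y2+y0-y1) = 16*A^2 := by linear_combination Hy
  have c0 := c_lt A x0 x1 x2 y0 y1 y2 hA hx1 hx2 hy1 hy2 nx0 ny0 Hx Hy h0
  have c1 := c_lt A x1 x2 x0 y1 y2 y0 hA hx2 hx0 hy2 hy0 nx1 ny1 Hx1 Hy1 h1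
  have c2 := c_lt A x2 x0 x1 y2 y0 y1 hA hx0 hx1 hy0 hy1 nx2 ny2 Hx2 Hy2 h2
  have idx := cos_identity x0 x1 x2 hx0.ne' hx1.ne' hx2.ne'
  have idy := cos_identity y0 y1 y2 hy0.ne' hy1.ne' hy2.ne'
  have a0 : (0:ℝ) ≤ (x1^2+x2^2-x0^2)/(2*x1*x2) := by positivity
  have a1 : (0:ℝ) ≤ (x2^2+x0^2-x1^2)/(2*x2*x0) := by positivity
  have a2 : (0:ℝ) ≤ (x0^2+x1^2-x2^2)/(2*x0*x1) := by positivity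
  have b0 : (0:ℝ) ≤ (y1^2+y2^2-y0^2)/(2*y1*y2) := a0.trans c0.le
  have b1 : (0:ℝ) ≤ (y2^2+y0^2-y1^2)/(2*y2*y0) := a1.trans c1.le
  have m1 : ((x1^2+x2^2-x0^2)/(2*x1*x2)) * ((x2^2+x0^2-x1^2)/(2*x2*x0)) ≤
      ((y1^2+y2^2-y0^2)/(2*y1*y2)) * ((y2^2+y0^2-y1^2)/(2*y2*y0)) :=
    mul_le_mul c0.le c1.le a1 b0
  have m2 : ((x1^2+x2^2-x0^2)/(2*x1*x2)) * ((x2^2+x0^2-x1^2)/(2*x2*x0)) *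
        ((x0^2+x1^2-x2^2)/(2*x0*x1)) ≤
      ((y1^2+y2^2-y0^2)/(2*y1*y2)) * ((y2^2+y0^2-y1^2)/(2*y2*y0)) *
        ((y0^2+y1^2-y2^2)/(2*y0*y1)) :=
    mul_le_mul m1 c2.le a2 (mul_nonneg b0 b1)
  have s0 : ((x1^2+x2^2-x0^2)/(2*x1*x2))^2 < ((y1^2+y2^2-y0^2)/(2*y1*y2))^2 := by
    nlinarith [a0, c0]
  have s1 : ((x2^2+x0^2-x1^2)/(2*x2*x0))^2 < ((y2^2+y0^2-y1^2)/(2*y2*y0))^2 := by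
    nlinarith [a1, c1]
  have s2 : ((x0^2+x1^2-x2^2)/(2*x0*x1))^2 < ((y0^2+y1^2-y2^2)/(2*y0*y1))^2 := by
    nlinarith [a2, c2]
  linarith [idx, idy, m2, s0, s1, s2]

lemma heron_sq {A : ℝ} (hA : 0 < A) {a : Fin 3 → ℝ} (ha : a ∈ X A) :
    (a 0 + a 1 + a 2) * (-a 0 + a 1 + a 2) * (a 0 - a 1 + a 2) * (a 0 + a 1 - a 2) = 16*A^2 := by
  obtain ⟨hpos, htri, hher⟩ := ha
  have h4 : Real.sqrt ((a 0 + a 1 + a 2) * (-a 0 + a 1 + a 2) *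
      (a 0 - a 1 + a 2) * (a 0 + a 1 - a 2)) = 4*A := by linarith
  have hE : 0 ≤ (a 0 + a 1 + a 2) * (-a 0 + a 1 + a 2) * (a 0 - a 1 + a 2) * (a 0 + a 1 - a 2) := by
    by_contra h
    push_neg at h
    rw [Real.sqrt_eq_zero'.mpr h.le] at h4
    linarith
  calc (a 0 + a 1 + a 2) * (-a 0 + a 1 + a 2) * (a 0 - a 1 + a 2) * (a 0 + a 1 - a 2)
      = Real.sqrt ((a 0 + a 1 + a 2) * (-a 0 + a 1 + a 2) *
        (a 0 - a 1 + a 2) * (a 0 + a 1 - a 2)) ^ 2 := (Real.sq_sqrt hE).symm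
    _ = 16*A^2 := by rw [h4]; ring

lemma XNo_no {A : ℝ} {a : Fin 3 → ℝ} (ha : a ∈ XNo A) (i : Fin 3) :
    0 ≤ a (i+1) ^ 2 + a (i+2) ^ 2 - a i ^ 2 := by
  have := ha.2 i (i+1) (i+2) (by fin_cases i <;> decide) (by fin_cases i <;> decide)
    (by fin_cases i <;> decide)
  linarith

lemma notall {A : ℝ} (hA : 0 < A) {a b : Fin 3 → ℝ} (ha : a ∈ XNo A) (hb : b ∈ XNo A) :
    ¬(a 1 * a 2 < b 1 * b 2 ∧ a 2 * a 0 < b 2 * b 0 ∧ a 0 * a 1 < b 0 * b 1) := by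
  rintro ⟨h0, h1, h2⟩
  exact core_notall A (a 0) (a 1) (a 2) (b 0) (b 1) (b 2) hA
    (ha.1.1 0) (ha.1.1 1) (ha.1.1 2) (hb.1.1 0) (hb.1.1 1) (hb.1.1 2)
    (XNo_no ha 0) (XNo_no ha 1) (XNo_no ha 2)
    (XNo_no hb 0) (XNo_no hb 1) (XNo_no hb 2)
    (heron_sq hA ha.1) (heron_sq hA hb.1) h0 h1 h2

lemma dd_eq {A : ℝ} (hA : 0 < A) {a b : Fin 3 → ℝ} (ha : a ∈ XNo A) (hb : b ∈ XNo A) :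
    dd a b = (|Real.log (a 1 * a 2) - Real.log (b 1 * b 2)|
      + |Real.log (a 2 * a 0) - Real.log (b 2 * b 0)|
      + |Real.log (a 0 * a 1) - Real.log (b 0 * b 1)|) / 2 := by
  have pa := ha.1.1
  have pb := hb.1.1
  have e0 : Real.log (a 1 * a 2) - Real.log (b 1 * b 2)
      = (Real.log (a 1) - Real.log (b 1)) + (Real.log (a 2) - Real.log (b 2)) := by
    rw [Real.log_mul (pa 1).ne' (pa 2).ne', Real.log_mul (pb 1).ne' (pb 2).ne']; ring
  have e1 : Real.log (a 2 * a 0) - Real.log (b 2 * b 0)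
      = (Real.log (a 2) - Real.log (b 2)) + (Real.log (a 0) - Real.log (b 0)) := by
    rw [Real.log_mul (pa 2).ne' (pa 0).ne', Real.log_mul (pb 2).ne' (pb 0).ne']; ring
  have e2 : Real.log (a 0 * a 1) - Real.log (b 0 * b 1)
      = (Real.log (a 0) - Real.log (b 0)) + (Real.log (a 1) - Real.log (b 1)) := by
    rw [Real.log_mul (pa 0).ne' (pa 1).ne', Real.log_mul (pb 0).ne' (pb 1).ne']; ring
  have hge : 0 ≤ (Real.log (a 1) - Real.log (b 1)) + (Real.log (a 2) - Real.log (b 2))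
      ∨ 0 ≤ (Real.log (a 2) - Real.log (b 2)) + (Real.log (a 0) - Real.log (b 0))
      ∨ 0 ≤ (Real.log (a 0) - Real.log (b 0)) + (Real.log (a 1) - Real.log (b 1)) := by
    by_contra h
    push_neg at h
    obtain ⟨k0, k1, k2⟩ := h
    refine notall hA ha hb ⟨?_, ?_, ?_⟩
    · refine (Real.log_lt_log_iff (mul_pos (pa 1) (pa 2)) (mul_pos (pb 1) (pb 2))).mp ?_
      have h' : Real.log (a 1 * a 2) - Real.log (b 1 * b 2) < 0 := by rw [e0]; linarith
      linarith
    · refine (Real.log_lt_log_iff (mul_pos (pa 2) (pa 0)) (mul_pos (pb 2) (pb 0))).mp ?_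
      have h' : Real.log (a 2 * a 0) - Real.log (b 2 * b 0) < 0 := by rw [e1]; linarith
      linarith
    · refine (Real.log_lt_log_iff (mul_pos (pa 0) (pa 1)) (mul_pos (pb 0) (pb 1))).mp ?_
      have h' : Real.log (a 0 * a 1) - Real.log (b 0 * b 1) < 0 := by rw [e2]; linarith
      linarith
  have hle : (Real.log (a 1) - Real.log (b 1)) + (Real.log (a 2) - Real.log (b 2)) ≤ 0
      ∨ (Real.log (a 2) - Real.log (b 2)) + (Real.log (a 0) - Real.log (b 0)) ≤ 0
      ∨ (Real.log (a 0) - Real.log (b 0)) + (Real.log (a 1) - Real.log (b 1)) ≤ 0 := by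
    by_contra h
    push_neg at h
    obtain ⟨k0, k1, k2⟩ := h
    refine notall hA hb ha ⟨?_, ?_, ?_⟩
    · refine (Real.log_lt_log_iff (mul_pos (pb 1) (pb 2)) (mul_pos (pa 1) (pa 2))).mp ?_
      have h' : 0 < Real.log (a 1 * a 2) - Real.log (b 1 * b 2) := by rw [e0]; linarith
      linarith
    · refine (Real.log_lt_log_iff (mul_pos (pb 2) (pb 0)) (mul_pos (pa 2) (pa 0))).mp ?_
      have h' : 0 < Real.log (a 2 * a 0) - Real.log (b 2 * b 0) := by rw [e1]; linarith
      linarith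
    · refine (Real.log_lt_log_iff (mul_pos (pb 0) (pb 1)) (mul_pos (pa 0) (pa 1))).mp ?_
      have h' : 0 < Real.log (a 0 * a 1) - Real.log (b 0 * b 1) := by rw [e2]; linarith
      linarith
  rw [show dd a b = max |Real.log (a 0) - Real.log (b 0)|
      (max |Real.log (a 1) - Real.log (b 1)| |Real.log (a 2) - Real.log (b 2)|) from rfl,
    e0, e1, e2]
  exact abs_max_eq (Real.log (a 0) - Real.log (b 0)) (Real.log (a 1) - Real.log (b 1))
    (Real.log (a 2) - Real.log (b 2)) hle hge

lemma theta_le_iff {A : ℝ} (hA : 0 < A) {a b : Fin 3 → ℝ} (ha : a ∈ XNo A) (hb : b ∈ XNo A)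
    (i : Fin 3) :
    thetaA a i ≤ thetaA b i ↔ Real.log (b (i+1) * b (i+2)) ≤ Real.log (a (i+1) * a (i+2)) := by
  have pa := ha.1.1
  have pb := hb.1.1
  have Ha := heron_sq hA ha.1
  have Hb := heron_sq hA hb.1
  have Ha1 : (a 1 + a 2 + a 0)*(-a 1 + a 2 + a 0)*(a 1 - a 2 + a 0)*(a 1 + a 2 - a 0) = 16*A^2 := by
    linear_combination Ha
  have Ha2 : (a 2 + a 0 + a 1)*(-a 2 + a 0 + a 1)*(a 2 - a 0 + a 1)*(a 2 + a 0 - a 1) = 16*A^2 := by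
    linear_combination Ha
  have Hb1 : (b 1 + b 2 + b 0)*(-b 1 + b 2 + b 0)*(b 1 - b 2 + b 0)*(b 1 + b 2 - b 0) = 16*A^2 := by
    linear_combination Hb
  have Hb2 : (b 2 + b 0 + b 1)*(-b 2 + b 0 + b 1)*(b 2 - b 0 + b 1)*(b 2 + b 0 - b 1) = 16*A^2 := by
    linear_combination Hb
  fin_cases i
  · show Real.arccos ((a 1 ^ 2 + a 2 ^ 2 - a 0 ^ 2) / (2 * a 1 * a 2)) ≤
        Real.arccos ((b 1 ^ 2 + b 2 ^ 2 - b 0 ^ 2) / (2 * b 1 * b 2)) ↔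
      Real.log (b 1 * b 2) ≤ Real.log (a 1 * a 2)
    exact theta_iff_core A (a 0) (a 1) (a 2) (b 0) (b 1) (b 2) hA (pa 1) (pa 2) (pb 1) (pb 2)
      (XNo_no ha 0) (XNo_no hb 0) Ha Hb
  · show Real.arccos ((a 2 ^ 2 + a 0 ^ 2 - a 1 ^ 2) / (2 * a 2 * a 0)) ≤
        Real.arccos ((b 2 ^ 2 + b 0 ^ 2 - b 1 ^ 2) / (2 * b 2 * b 0)) ↔
      Real.log (b 2 * b 0) ≤ Real.log (a 2 * a 0)
    exact theta_iff_core A (a 1) (a 2) (a 0) (b 1) (b 2) (b 0) hA (pa 2) (pa 0) (pb 2) (pb 0)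
      (XNo_no ha 1) (XNo_no hb 1) Ha1 Hb1
  · show Real.arccos ((a 0 ^ 2 + a 1 ^ 2 - a 2 ^ 2) / (2 * a 0 * a 1)) ≤
        Real.arccos ((b 0 ^ 2 + b 1 ^ 2 - b 2 ^ 2) / (2 * b 0 * b 1)) ↔
      Real.log (b 0 * b 1) ≤ Real.log (a 0 * a 1)
    exact theta_iff_core A (a 2) (a 0) (a 1) (b 2) (b 0) (b 1) hA (pa 0) (pa 1) (pb 0) (pb 1)
      (XNo_no ha 2) (XNo_no hb 2) Ha2 Hb2

lemma mono_or_anti_congr {f g : ℝ → ℝ} {S : Set ℝ}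
    (h : ∀ s ∈ S, ∀ t ∈ S, (f s ≤ f t ↔ g t ≤ g s)) :
    (MonotoneOn f S ∨ AntitoneOn f S) ↔ (MonotoneOn g S ∨ AntitoneOn g S) := by
  constructor
  · rintro (hf|hf)
    · right; intro s hs t ht hst; exact (h s hs t ht).mp (hf hs ht hst)
    · left; intro s hs t ht hst; exact (h t ht s hs).mp (hf hs ht hst)
  · rintro (hg|hg)
    · right; intro s hs t ht hst; exact (h t ht s hs).mpr (hg hs ht hst)
    · left; intro s hs t ht hst; exact (h s hs t ht).mpr (hg hs ht hst)

lemma mono_of_between {f : ℝ → ℝ}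
    (h : ∀ s u t : ℝ, 0 ≤ s → s ≤ u → u ≤ t → t ≤ 1 →
      |f s - f t| = |f s - f u| + |f u - f t|) :
    MonotoneOn f (Set.Icc 0 1) ∨ AntitoneOn f (Set.Icc 0 1) := by
  rcases le_total (f 0) (f 1) with h01 | h01
  · left
    intro s hs t ht hst
    by_contra hc
    push_neg at hc
    have e1 := h 0 s t le_rfl hs.1 hst ht.2
    have e2 := h s t 1 hs.1 hst ht.2 le_rfl
    rcases abs_cases (f 0 - f t) with ⟨u1,_⟩|⟨u1,_⟩ <;>
      rcases abs_cases (f 0 - f s) with ⟨u2,_⟩|⟨u2,_⟩ <;>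
      rcases abs_cases (f s - f t) with ⟨u3,_⟩|⟨u3,_⟩ <;>
      rcases abs_cases (f s - f 1) with ⟨u4,_⟩|⟨u4,_⟩ <;>
      rcases abs_cases (f t - f 1) with ⟨u5,_⟩|⟨u5,_⟩ <;>
      linarith
  · right
    intro s hs t ht hst
    by_contra hc
    push_neg at hc
    have e1 := h 0 s t le_rfl hs.1 hst ht.2
    have e2 := h s t 1 hs.1 hst ht.2 le_rfl
    rcases abs_cases (f 0 - f t) with ⟨u1,_⟩|⟨u1,_⟩ <;>
      rcases abs_cases (f 0 - f s) with ⟨u2,_⟩|⟨u2,_⟩ <;>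
      rcases abs_cases (f s - f t) with ⟨u3,_⟩|⟨u3,_⟩ <;>
      rcases abs_cases (f s - f 1) with ⟨u4,_⟩|⟨u4,_⟩ <;>
      rcases abs_cases (f t - f 1) with ⟨u5,_⟩|⟨u5,_⟩ <;>
      linarith

lemma abs_split_mono {x y z : ℝ} (h1 : x ≤ y) (h2 : y ≤ z) : |x - z| = |x - y| + |y - z| := by
  rw [abs_of_nonpos (by linarith), abs_of_nonpos (by linarith), abs_of_nonpos (by linarith)]
  ring

lemma abs_split_anti {x y z : ℝ} (h1 : y ≤ x) (h2 : z ≤ y) : |x - z| = |x - y| + |y - z| := by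
  rw [abs_of_nonneg (by linarith), abs_of_nonneg (by linarith), abs_of_nonneg (by linarith)]
  ring

/-- A continuous path in `X_A^no` which is not constant on any nondegenerate subinterval
is a geodesic for `d` iff each angle function is monotone along the path. -/
theorem stmt12 (A : ℝ) (hA : 0 < A) (γ : ℝ → (Fin 3 → ℝ))
    (hcont : ContinuousOn γ (Set.Icc 0 1))
    (hmem : ∀ t ∈ Set.Icc (0:ℝ) 1, γ t ∈ XNo A)
    (hnc : ∀ s t : ℝ, 0 ≤ s → s < t → t ≤ 1 → ∃ u, s ≤ u ∧ u ≤ t ∧ γ u ≠ γ s) :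
    ((∀ s u t : ℝ, 0 ≤ s → s ≤ u → u ≤ t → t ≤ 1 →
        dd (γ s) (γ t) = dd (γ s) (γ u) + dd (γ u) (γ t)) ↔
      (∀ i : Fin 3, MonotoneOn (fun t => thetaA (γ t) i) (Set.Icc 0 1) ∨
        AntitoneOn (fun t => thetaA (γ t) i) (Set.Icc 0 1))) := by
  set g0 : ℝ → ℝ := fun t => Real.log (γ t 1 * γ t 2) with hg0
  set g1 : ℝ → ℝ := fun t => Real.log (γ t 2 * γ t 0) with hg1
  set g2 : ℝ → ℝ := fun t => Real.log (γ t 0 * γ t 1) with hg2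
  have key : ∀ s ∈ Set.Icc (0:ℝ) 1, ∀ t ∈ Set.Icc (0:ℝ) 1,
      dd (γ s) (γ t) = (|g0 s - g0 t| + |g1 s - g1 t| + |g2 s - g2 t|) / 2 :=
    fun s hs t ht => dd_eq hA (hmem s hs) (hmem t ht)
  have congr0 : ∀ s ∈ Set.Icc (0:ℝ) 1, ∀ t ∈ Set.Icc (0:ℝ) 1,
      ((fun t => thetaA (γ t) 0) s ≤ (fun t => thetaA (γ t) 0) t ↔ g0 t ≤ g0 s) :=
    fun s hs t ht => theta_le_iff hA (hmem s hs) (hmem t ht) 0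
  have congr1 : ∀ s ∈ Set.Icc (0:ℝ) 1, ∀ t ∈ Set.Icc (0:ℝ) 1,
      ((fun t => thetaA (γ t) 1) s ≤ (fun t => thetaA (γ t) 1) t ↔ g1 t ≤ g1 s) :=
    fun s hs t ht => theta_le_iff hA (hmem s hs) (hmem t ht) 1
  have congr2 : ∀ s ∈ Set.Icc (0:ℝ) 1, ∀ t ∈ Set.Icc (0:ℝ) 1,
      ((fun t => thetaA (γ t) 2) s ≤ (fun t => thetaA (γ t) 2) t ↔ g2 t ≤ g2 s) :=
    fun s hs t ht => theta_le_iff hA (hmem s hs) (hmem t ht) 2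
  constructor
  · intro hgeo i
    have hbet : ∀ s u t : ℝ, 0 ≤ s → s ≤ u → u ≤ t → t ≤ 1 →
        (|g0 s - g0 t| = |g0 s - g0 u| + |g0 u - g0 t|) ∧
        (|g1 s - g1 t| = |g1 s - g1 u| + |g1 u - g1 t|) ∧
        (|g2 s - g2 t| = |g2 s - g2 u| + |g2 u - g2 t|) := by
      intro s u t h0 hsu hut h1
      have hs : s ∈ Set.Icc (0:ℝ) 1 := ⟨h0, hsu.trans (hut.trans h1)⟩
      have hu : u ∈ Set.Icc (0:ℝ) 1 := ⟨h0.trans hsu, hut.trans h1⟩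
      have ht : t ∈ Set.Icc (0:ℝ) 1 := ⟨(h0.trans hsu).trans hut, h1⟩
      have e := hgeo s u t h0 hsu hut h1
      rw [key s hs t ht, key s hs u hu, key u hu t ht] at e
      have i0 := abs_sub_le (g0 s) (g0 u) (g0 t)
      have i1 := abs_sub_le (g1 s) (g1 u) (g1 t)
      have i2 := abs_sub_le (g2 s) (g2 u) (g2 t)
      exact ⟨by linarith, by linarith, by linarith⟩
    fin_cases i
    · exact (mono_or_anti_congr congr0).mpr
        (mono_of_between fun s u t h0 h1 h2 h3 => (hbet s u t h0 h1 h2 h3).1)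
    · exact (mono_or_anti_congr congr1).mpr
        (mono_of_between fun s u t h0 h1 h2 h3 => (hbet s u t h0 h1 h2 h3).2.1)
    · exact (mono_or_anti_congr congr2).mpr
        (mono_of_between fun s u t h0 h1 h2 h3 => (hbet s u t h0 h1 h2 h3).2.2)
  · intro hmono s u t h0 hsu hut h1
    have hs : s ∈ Set.Icc (0:ℝ) 1 := ⟨h0, hsu.trans (hut.trans h1)⟩
    have hu : u ∈ Set.Icc (0:ℝ) 1 := ⟨h0.trans hsu, hut.trans h1⟩
    have ht : t ∈ Set.Icc (0:ℝ) 1 := ⟨(h0.trans hsu).trans hut, h1⟩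
    have hg0m : MonotoneOn g0 (Set.Icc 0 1) ∨ AntitoneOn g0 (Set.Icc 0 1) :=
      (mono_or_anti_congr congr0).mp (hmono 0)
    have hg1m : MonotoneOn g1 (Set.Icc 0 1) ∨ AntitoneOn g1 (Set.Icc 0 1) :=
      (mono_or_anti_congr congr1).mp (hmono 1)
    have hg2m : MonotoneOn g2 (Set.Icc 0 1) ∨ AntitoneOn g2 (Set.Icc 0 1) :=
      (mono_or_anti_congr congr2).mp (hmono 2)
    have c0 : |g0 s - g0 t| = |g0 s - g0 u| + |g0 u - g0 t| := by
      rcases hg0m with hm | hm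
      · exact abs_split_mono (hm hs hu hsu) (hm hu ht hut)
      · exact abs_split_anti (hm hs hu hsu) (hm hu ht hut)
    have c1 : |g1 s - g1 t| = |g1 s - g1 u| + |g1 u - g1 t| := by
      rcases hg1m with hm | hm
      · exact abs_split_mono (hm hs hu hsu) (hm hu ht hut)
      · exact abs_split_anti (hm hs hu hsu) (hm hu ht hut)
    have c2 : |g2 s - g2 t| = |g2 s - g2 u| + |g2 u - g2 t| := by
      rcases hg2m with hm | hm
      · exact abs_split_mono (hm hs hu hsu) (hm hu ht hut)
      · exact abs_split_anti (hm hs hu hsu) (hm hu ht hut)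
    rw [key s hs t ht, key s hs u hu, key u hu t ht]
    linarith

end
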